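/- Let tri : ℝ → ℝ be the 2π-periodic triangular wave tri(x) = 1 − (2/π)·arccos(cos x), let g(θ) = tri(3θ), and let n = 2m be an even positive integer. Put θ_k = 2πk/n and ζ_k = exp(θ_k·I) ∈ ℂ for k ∈ Fin n, and for i ≠ j define ρ_{ij} = (g(θ_i)·ζ_i − g(θ_j)·ζ_j) / (ζ_i − ζ_j). Then the sum of ρ_{ij} over all ordered pairs (i,j) with i ≠ j equals 0. -/
import Mathlib


/-- The 2π-periodic triangular wave `tri x = 1 − (2/π)·arccos (cos x)`. -/
noncomputable def tri (x : ℝ) : ℝ := 1 - 2 / Real.pi * Real.arccos (Real.cos x)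

/-- `g θ = tri (3θ)`. -/
noncomputable def g (θ : ℝ) : ℝ := tri (3 * θ)

/-- The angle `θ_k = 2πk/n`. -/
noncomputable def theta (n : ℕ) (k : Fin n) : ℝ := 2 * Real.pi * ((k : ℕ) : ℝ) / n

/-- The root of unity `ζ_k = exp(θ_k · I)`. -/
noncomputable def zeta (n : ℕ) (k : Fin n) : ℂ :=
  Complex.exp (((theta n k : ℝ) : ℂ) * Complex.I)

/-- `ρ_{ij} = (g(θ_i)·ζ_i − g(θ_j)·ζ_j)/(ζ_i − ζ_j)`. -/
noncomputable def rho (n : ℕ) (i j : Fin n) : ℂ :=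
  (((g (theta n i) : ℝ) : ℂ) * zeta n i - ((g (theta n j) : ℝ) : ℂ) * zeta n j) /
    (zeta n i - zeta n j)

lemma tri_cos_neg {a b : ℝ} (h : Real.cos a = -Real.cos b) : tri a = -tri b := by
  unfold tri
  rw [h, Real.arccos_neg]
  have hπ : (Real.pi : ℝ) ≠ 0 := Real.pi_ne_zero
  field_simp
  ring

lemma theta_shift (m : ℕ) (hm : 1 ≤ m) (i : Fin (2*m)) :
    ∃ t : ℤ, theta (2*m) (i + ⟨m, by omega⟩) = theta (2*m) i + Real.pi + 2*Real.pi*t := by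
  refine ⟨-((((i : ℕ) + m) / (2*m) : ℕ) : ℤ), ?_⟩
  have hq := Nat.div_add_mod ((i : ℕ) + m) (2*m)
  unfold theta
  rw [Fin.val_add]
  set q := ((i : ℕ) + m) / (2*m) with hqdef
  set r := ((i : ℕ) + m) % (2*m) with hrdef
  have hr : (r : ℝ) = ((i : ℕ) : ℝ) + m - (2*m) * q := by
    have h2 : (2*m) * q + r = (i : ℕ) + m := hq
    have := congrArg (fun x : ℕ => (x : ℝ)) h2
    push_cast at this ⊢
    linarith
  have hmpos : (0:ℝ) < (m:ℝ) := by exact_mod_cast hm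
  have hn0 : ((2*m : ℕ) : ℝ) ≠ 0 := by push_cast; positivity
  rw [hr]
  push_cast at hn0 ⊢
  field_simp
  ring

lemma g_shift (m : ℕ) (hm : 1 ≤ m) (i : Fin (2*m)) :
    g (theta (2*m) (i + ⟨m, by omega⟩)) = - g (theta (2*m) i) := by
  obtain ⟨t, ht⟩ := theta_shift m hm i
  rw [ht]
  unfold g
  apply tri_cos_neg
  have h1 : 3 * (theta (2*m) i + Real.pi + 2*Real.pi*t)
      = (3*theta (2*m) i + Real.pi) + ((3*t+1 : ℤ) : ℝ) * (2*Real.pi) := by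
    push_cast; ring
  rw [h1, Real.cos_add_int_mul_two_pi, Real.cos_add_pi]

lemma zeta_shift (m : ℕ) (hm : 1 ≤ m) (i : Fin (2*m)) :
    zeta (2*m) (i + ⟨m, by omega⟩) = - zeta (2*m) i := by
  obtain ⟨t, ht⟩ := theta_shift m hm i
  unfold zeta
  rw [ht]
  have h1 : (((theta (2*m) i + Real.pi + 2*Real.pi*t : ℝ)) : ℂ) * Complex.I
      = (theta (2*m) i : ℝ) * Complex.I + Real.pi * Complex.I
        + (t : ℂ) * (2 * (Real.pi : ℂ) * Complex.I) := by
    push_cast; ring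
  rw [h1, Complex.exp_add, Complex.exp_add, Complex.exp_pi_mul_I,
    Complex.exp_int_mul_two_pi_mul_I]
  ring

lemma rho_shift (m : ℕ) (hm : 1 ≤ m) (i j : Fin (2*m)) :
    rho (2*m) (i + ⟨m, by omega⟩) (j + ⟨m, by omega⟩) = - rho (2*m) i j := by
  unfold rho
  rw [g_shift m hm i, g_shift m hm j, zeta_shift m hm i, zeta_shift m hm j]
  have h1 : ((-g (theta (2*m) i) : ℝ) : ℂ) * (-(zeta (2*m) i))
      - ((-g (theta (2*m) j) : ℝ) : ℂ) * (-(zeta (2*m) j))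
      = ((g (theta (2*m) i) : ℝ) : ℂ) * zeta (2*m) i
        - ((g (theta (2*m) j) : ℝ) : ℂ) * zeta (2*m) j := by
    push_cast; ring
  have h2 : -(zeta (2*m) i) - -(zeta (2*m) j) = -(zeta (2*m) i - zeta (2*m) j) := by ring
  rw [h1, h2, div_neg]

theorem stmt18 (m n : ℕ) (hm : 1 ≤ m) (hn : n = 2 * m) :
    ∑ p ∈ Finset.univ.filter (fun p : Fin n × Fin n => p.1 ≠ p.2),
      rho n p.1 p.2 = 0 := by
  subst hn
  haveI : NeZero (2*m) := ⟨by omega⟩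
  set mf : Fin (2*m) := ⟨m, by omega⟩ with hmf
  set F := Finset.univ.filter (fun p : Fin (2*m) × Fin (2*m) => p.1 ≠ p.2) with hF
  set S := ∑ p ∈ F, rho (2*m) p.1 p.2 with hS
  have hbij : Function.Bijective (fun p : Fin (2*m) × Fin (2*m) => (p.1 + mf, p.2 + mf)) := by
    constructor
    · intro p q h
      simp only [Prod.mk.injEq] at h
      exact Prod.ext (add_right_cancel h.1) (add_right_cancel h.2)
    · intro p
      exact ⟨(p.1 - mf, p.2 - mf), by simp⟩
  have h1 : ∑ p ∈ F, rho (2*m) (p.1 + mf) (p.2 + mf) = S := by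
    refine Finset.sum_bijective _ hbij ?_ ?_
    · intro p
      simp only [hF, Finset.mem_filter, Finset.mem_univ, true_and]
      constructor
      · intro h hc
        exact h (add_right_cancel hc)
      · intro h hc
        exact h (by rw [hc])
    · intro p _
      rfl
  have h2 : ∑ p ∈ F, rho (2*m) (p.1 + mf) (p.2 + mf) = -S := by
    rw [hS, ← Finset.sum_neg_distrib]
    exact Finset.sum_congr rfl fun p _ => rho_shift m hm p.1 p.2
  have key : S = -S := h1.symm.trans h2
  have : (2 : ℂ) * S = 0 := by linear_combination key
  have h2ne : (2 : ℂ) ≠ 0 := two_ne_zero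
  exact (mul_eq_zero.mp this).resolve_left h2ne
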